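/- Let c ≥ 1 and let U be a unitary c × c complex matrix (U ∈ Matrix.unitaryGroup (Fin c) ℂ) whose spectrum over ℂ does not contain 1. Then the function z ↦ exp(⟪U.mulVec z, z⟫ − ‖z‖²) is integrable on EuclideanSpace ℂ (Fin c) with respect to the Lebesgue (volume) measure, and ∫_{ℂᶜ} exp(⟪U.mulVec z, z⟫ − ‖z‖²) dz = π^c / det(1 − Uᴴ), where ⟪·, ·⟫ is the standard Hermitian inner product on ℂᶜ (conjugate-linear in the first argument), ‖·‖ the Euclidean norm, Uᴴ the conjugate transpose of U, and the integral is taken with respect to the 2c-dimensional Lebesgue measure. -/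

import Mathlib

open scoped Real

/- Lebesgue (Borel) measurable structure on complex Euclidean space, analogous to the one
Mathlib provides for `EuclideanSpace ℝ ι`; combined with
`measureSpaceOfInnerProductSpace` it yields the `2c`-dimensional Lebesgue volume. -/
noncomputable instance (ι : Type*) : MeasurableSpace (EuclideanSpace ℂ ι) :=
  MeasurableSpace.comap WithLp.ofLp MeasurableSpace.pi

instance (ι : Type*) [Finite ι] : BorelSpace (EuclideanSpace ℂ ι) :=
  PiLp.borelSpace 2

open Module MeasureTheory

section Helpers

lemma re_inner_euclidean {ι : Type*} [Fintype ι] (x y : EuclideanSpace ℂ ι) :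
    (inner ℝ x y : ℝ) = (inner ℂ x y : ℂ).re := by
  rw [PiLp.inner_apply (𝕜 := ℝ), PiLp.inner_apply (𝕜 := ℂ), Complex.re_sum]
  refine Finset.sum_congr rfl fun i _ => ?_
  exact real_inner_eq_re_inner ℂ (x i) (y i)

lemma gauss_sq {b : ℂ} (hb : 0 < b.re) :
    (∫ t : ℝ, Complex.exp (-b * t ^ 2)) ^ 2 = (Real.pi : ℂ) / b := by
  have hbne : b ≠ 0 := by
    intro h; rw [h] at hb; simp at hb
  have hne : (Real.pi : ℂ) / b ≠ 0 :=
    div_ne_zero (by exact_mod_cast Real.pi_ne_zero) hbne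
  rw [integral_gaussian_complex hb, sq, ← Complex.cpow_add _ _ hne]
  norm_num

end Helpers


section Eigenbasis
variable {E : Type*} [NormedAddCommGroup E] [InnerProductSpace ℂ E] [FiniteDimensional ℂ E]

open Module.End in
lemma exists_unitary_eigenbasis {n : ℕ} (hn : finrank ℂ E = n) (T : E →ₗ[ℂ] E)
    (hT : Commute T (LinearMap.adjoint T)) :
    ∃ (b : OrthonormalBasis (Fin n) ℂ E) (μ : Fin n → ℂ), ∀ i, T (b i) = μ i • b i := by
  classical
  set S := LinearMap.adjoint T with hS
  set A : E →ₗ[ℂ] E := (2⁻¹ : ℂ) • (T + S) with hA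
  set B : E →ₗ[ℂ] E := (Complex.I * 2⁻¹) • (S - T) with hB
  have hAsym : A.IsSymmetric := by
    intro x y
    simp only [hA, LinearMap.smul_apply, LinearMap.add_apply, inner_smul_left, inner_smul_right,
      inner_add_left, inner_add_right, hS, LinearMap.adjoint_inner_left,
      LinearMap.adjoint_inner_right, map_inv₀, map_ofNat]
    ring
  have hBsym : B.IsSymmetric := by
    intro x y
    simp only [hB, LinearMap.smul_apply, LinearMap.sub_apply, inner_smul_left, inner_smul_right,
      inner_sub_left, inner_sub_right, hS, LinearMap.adjoint_inner_left,
      LinearMap.adjoint_inner_right, map_mul, map_inv₀, map_ofNat, Complex.conj_I]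
    ring
  have hAB : Commute A B := by
    have h0 : Commute (T + S) (S - T) := by
      have h1 : T * S = S * T := hT
      show (T + S) * (S - T) = (S - T) * (T + S)
      rw [add_mul, mul_sub, mul_sub, sub_mul, mul_add, mul_add, h1]
      abel
    exact (h0.smul_left _).smul_right _
  have hTAB : ∀ x, T x = A x + Complex.I • B x := by
    intro x
    have hI : Complex.I * (Complex.I * 2⁻¹) = -2⁻¹ := by
      rw [← mul_assoc, Complex.I_mul_I]; ring
    simp only [hA, hB, LinearMap.smul_apply, LinearMap.add_apply, LinearMap.sub_apply,
      smul_smul, hI]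
    module
  set V : ℂ × ℂ → Submodule ℂ E := fun i => eigenspace A i.2 ⊓ eigenspace B i.1 with hV
  have hfam := hAsym.orthogonalFamily_eigenspace_inf_eigenspace hBsym
  have hInt : DirectSum.IsInternal V := hAsym.directSum_isInternal_of_commute hBsym hAB
  have hEV : ∀ i : ℂ × ℂ, V i ≠ ⊥ → HasEigenvalue A i.2 ∧ HasEigenvalue B i.1 := by
    intro i hi
    obtain ⟨x, hx, hx0⟩ := (Submodule.ne_bot_iff _).mp hi
    exact ⟨hasEigenvalue_of_hasEigenvector ⟨hx.1, hx0⟩,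
      hasEigenvalue_of_hasEigenvector ⟨hx.2, hx0⟩⟩
  set s : Type _ := {i : ℂ × ℂ // V i ≠ ⊥} with hsdef
  haveI : Fintype s := by
    refine Fintype.ofInjective
      (fun i : s => ((⟨i.1.2, (hEV i.1 i.2).1⟩, ⟨i.1.1, (hEV i.1 i.2).2⟩) :
        Eigenvalues A × Eigenvalues B)) ?_
    intro i j h
    apply Subtype.ext
    apply Prod.ext
    · exact congrArg (fun p => (p.2 : ℂ)) h
    · exact congrArg (fun p => (p.1 : ℂ)) h
  set V' : s → Submodule ℂ E := fun i => V i.1 with hV'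
  have hfam' : OrthogonalFamily ℂ (fun i => V' i) fun i => (V' i).subtypeₗᵢ :=
    hfam.comp Subtype.val_injective
  have hsup : (⨆ i, V' i) = ⨆ i, V i := by
    apply le_antisymm
    · exact iSup_le fun i => le_iSup V i.1
    · refine iSup_le fun i => ?_
      by_cases h : V i = ⊥
      · rw [h]; exact bot_le
      · exact le_iSup_of_le ⟨i, h⟩ le_rfl
  have hInt' : DirectSum.IsInternal V' := by
    rw [hfam'.isInternal_iff, hsup]
    exact (hfam.isInternal_iff).mp hInt
  set b := hInt'.subordinateOrthonormalBasis hn hfam' with hb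
  refine ⟨b, fun i => (hInt'.subordinateOrthonormalBasisIndex hn i hfam').1.2 +
    Complex.I * (hInt'.subordinateOrthonormalBasisIndex hn i hfam').1.1, fun i => ?_⟩
  have hmem := hInt'.subordinateOrthonormalBasis_subordinate hn i hfam'
  have hmA := (Module.End.mem_eigenspace_iff).mp (Submodule.mem_inf.mp hmem).1
  have hmB := (Module.End.mem_eigenspace_iff).mp (Submodule.mem_inf.mp hmem).2
  rw [hTAB, hmA, hmB, smul_smul, ← add_smul]

end Eigenbasis


set_option maxHeartbeats 2000000 in
/-- Gaussian integral: for a unitary matrix `U` with `1` not in its spectrum, the function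
`z ↦ exp (⟪U z, z⟫ - ‖z‖²)` is integrable on complex Euclidean space w.r.t. the Lebesgue
volume and its integral equals `π^c / det (1 - Uᴴ)`. -/
theorem stmt12 (c : ℕ) (hc : 1 ≤ c) (U : Matrix (Fin c) (Fin c) ℂ)
    (hU : U ∈ Matrix.unitaryGroup (Fin c) ℂ) (hspec : (1 : ℂ) ∉ spectrum ℂ U) :
    MeasureTheory.Integrable
        (fun z : EuclideanSpace ℂ (Fin c) =>
          Complex.exp
            ((inner ℂ ((WithLp.equiv 2 (Fin c → ℂ)).symm (U.mulVec z)) z : ℂ) - (‖z‖ : ℂ) ^ 2))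
        MeasureTheory.volume ∧
      ∫ z : EuclideanSpace ℂ (Fin c),
          Complex.exp
            ((inner ℂ ((WithLp.equiv 2 (Fin c → ℂ)).symm (U.mulVec z)) z : ℂ) - (‖z‖ : ℂ) ^ 2)
          ∂MeasureTheory.volume =
        (Real.pi : ℂ) ^ c / (1 - U.conjTranspose).det := by
  classical
  set M : EuclideanSpace ℂ (Fin c) →L[ℂ] EuclideanSpace ℂ (Fin c) :=
    Matrix.toEuclideanCLM (𝕜 := ℂ) U with hM
  set T : EuclideanSpace ℂ (Fin c) →ₗ[ℂ] EuclideanSpace ℂ (Fin c) :=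
    (M : EuclideanSpace ℂ (Fin c) →ₗ[ℂ] EuclideanSpace ℂ (Fin c)) with hT
  set f : EuclideanSpace ℂ (Fin c) → ℂ := fun z =>
    Complex.exp ((inner ℂ ((WithLp.equiv 2 (Fin c → ℂ)).symm (U.mulVec z)) z : ℂ) - (‖z‖ : ℂ) ^ 2)
    with hf
  -- the integrand in terms of T
  have hTz : ∀ z : EuclideanSpace ℂ (Fin c), T z = (WithLp.equiv 2 (Fin c → ℂ)).symm (U.mulVec z) := by
    intro z
    have h2 := congrArg (fun (L : EuclideanSpace ℂ (Fin c) →ₗ[ℂ] EuclideanSpace ℂ (Fin c)) => L z) (Matrix.coe_toEuclideanCLM_eq_toEuclideanLin U)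
    simp only [ContinuousLinearMap.coe_coe] at h2
    rw [hT, ContinuousLinearMap.coe_coe, hM, h2, Matrix.toEuclideanLin_apply]
    rfl
  have hfT : ∀ z : EuclideanSpace ℂ (Fin c), f z = Complex.exp ((inner ℂ (T z) z : ℂ) - (inner ℂ z z : ℂ)) := by
    intro z
    rw [hf, hTz z, inner_self_eq_norm_sq_to_K]
    rfl
  -- unitarity in operator form
  have hM1 : star M * M = 1 := by
    rw [hM, ← map_star, ← map_mul, hU.1, map_one]
  have hM2 : M * star M = 1 := by
    rw [hM, ← map_star, ← map_mul, hU.2, map_one]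
  have hadj : LinearMap.adjoint T = ((star M : EuclideanSpace ℂ (Fin c) →L[ℂ] EuclideanSpace ℂ (Fin c)) :
      EuclideanSpace ℂ (Fin c) →ₗ[ℂ] EuclideanSpace ℂ (Fin c)) := by
    symm
    rw [LinearMap.eq_adjoint_iff]
    intro x y
    rw [ContinuousLinearMap.coe_coe, ContinuousLinearMap.star_eq_adjoint]
    exact ContinuousLinearMap.adjoint_inner_left M y x
  have hnormal : Commute T (LinearMap.adjoint T) := by
    rw [hadj]
    have h := hM2.trans hM1.symm
    have h2 := congrArg (ContinuousLinearMap.toLinearMap) h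
    simpa [ContinuousLinearMap.mul_def, ContinuousLinearMap.coe_comp,
      Module.End.mul_eq_comp, Commute, SemiconjBy, hT] using h2
  obtain ⟨b, μ, hbμ⟩ := exists_unitary_eigenbasis (finrank_euclideanSpace_fin) T hnormal
  -- determinant identities
  have hdet1 : (1 - U).det = ∏ j, (1 - μ j) := by
    have e1 : Matrix.toEuclideanLin (1 - U) = (1 : EuclideanSpace ℂ (Fin c) →ₗ[ℂ] EuclideanSpace ℂ (Fin c)) - T := by
      rw [← Matrix.coe_toEuclideanCLM_eq_toEuclideanLin, map_sub, map_one]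
      rfl
    calc (1 - U).det = LinearMap.det (Matrix.toEuclideanLin (1 - U)) := by
          rw [Matrix.toEuclideanLin_eq_toLin, LinearMap.det_toLin]
      _ = LinearMap.det ((1 : EuclideanSpace ℂ (Fin c) →ₗ[ℂ] EuclideanSpace ℂ (Fin c)) - T) := by rw [e1]
      _ = (LinearMap.toMatrix b.toBasis b.toBasis ((1 : EuclideanSpace ℂ (Fin c) →ₗ[ℂ] EuclideanSpace ℂ (Fin c)) - T)).det := by
          rw [LinearMap.det_toMatrix]
      _ = (Matrix.diagonal fun j => 1 - μ j).det := by
          congr 1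
          ext i j
          rw [LinearMap.toMatrix_apply, Matrix.diagonal_apply]
          have : ((1 : EuclideanSpace ℂ (Fin c) →ₗ[ℂ] EuclideanSpace ℂ (Fin c)) - T) (b.toBasis j) = (1 - μ j) • b j := by
            rw [OrthonormalBasis.coe_toBasis, LinearMap.sub_apply, Module.End.one_apply,
              hbμ j, sub_smul, one_smul]
          have h5 : b.toBasis.repr ((1 - μ j) • b j) = (1 - μ j) • b.toBasis.repr (b j) :=
            LinearEquiv.map_smul _ _ _
          rw [this, h5, ← OrthonormalBasis.coe_toBasis, Basis.repr_self]
          simp only [Finsupp.smul_single, Finsupp.single_apply, smul_eq_mul, mul_one,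
            Matrix.one_apply, Matrix.sub_apply, eq_comm (a := i) (b := j)]
          split <;> simp_all
      _ = ∏ j, (1 - μ j) := Matrix.det_diagonal
  have hdet2 : (1 - U.conjTranspose).det = ∏ j, (1 - (starRingEnd ℂ) (μ j)) := by
    have e : (1 : Matrix (Fin c) (Fin c) ℂ) - U.conjTranspose = (1 - U).conjTranspose := by
      rw [Matrix.conjTranspose_sub, Matrix.conjTranspose_one]
    rw [e, Matrix.det_conjTranspose, hdet1,
      show (star (∏ j, (1 - μ j)) : ℂ) = (starRingEnd ℂ) (∏ j, (1 - μ j)) from rfl, map_prod]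
    exact Finset.prod_congr rfl fun j _ => by rw [map_sub, map_one]
  have hdet_ne : (1 - U).det ≠ 0 := by
    have hu : IsUnit (1 - U) := by
      by_contra h
      exact hspec (spectrum.mem_iff.mpr (by simpa using h))
    exact isUnit_iff_ne_zero.mp ((Matrix.isUnit_iff_isUnit_det _).mp hu)
  have hμne1 : ∀ j, μ j ≠ 1 := by
    intro j hj
    apply hdet_ne
    rw [hdet1]
    exact Finset.prod_eq_zero (Finset.mem_univ j) (by rw [hj]; ring)
  have horth : ∀ j, (inner ℂ (b j) (b j) : ℂ) = 1 := by
    intro j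
    rw [inner_self_eq_norm_sq_to_K, b.orthonormal.1 j]
    norm_num
  have hμnorm : ∀ j, (starRingEnd ℂ) (μ j) * μ j = 1 := by
    intro j
    have h2 : (inner ℂ (M (b j)) (M (b j)) : ℂ) = inner ℂ (b j) (b j) := by
      have hst : (ContinuousLinearMap.adjoint M) (M (b j)) = b j := by
        rw [← ContinuousLinearMap.star_eq_adjoint, ← ContinuousLinearMap.mul_apply, hM1,
          ContinuousLinearMap.one_apply]
      calc (inner ℂ (M (b j)) (M (b j)) : ℂ)
          = inner ℂ ((ContinuousLinearMap.adjoint M) (M (b j))) (b j) :=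
            (ContinuousLinearMap.adjoint_inner_left M (b j) (M (b j))).symm
        _ = inner ℂ (b j) (b j) := by rw [hst]
    have h3 : (inner ℂ (T (b j)) (T (b j)) : ℂ) = (starRingEnd ℂ) (μ j) * μ j := by
      rw [hbμ j, inner_smul_left, inner_smul_right, horth j]
      ring
    have h4 : (inner ℂ (T (b j)) (T (b j)) : ℂ) = inner ℂ (M (b j)) (M (b j)) := rfl
    rw [h4, h2, horth j] at h3
    exact h3.symm
  have hre : ∀ j, 0 < (1 - (starRingEnd ℂ) (μ j)).re := by
    intro j
    have h1 : Complex.normSq (μ j) = 1 := by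
      have h := hμnorm j
      rw [← Complex.normSq_eq_conj_mul_self] at h
      exact_mod_cast h
    have h2 : (1 - (starRingEnd ℂ) (μ j)).re = 1 - (μ j).re := by
      simp [Complex.sub_re]
    rw [h2, sub_pos]
    by_contra hcon
    push_neg at hcon
    rw [Complex.normSq_apply] at h1
    have h6 : (μ j).im * (μ j).im ≤ 0 := by nlinarith [mul_self_nonneg ((μ j).re - 1)]
    have him : (μ j).im = 0 := mul_self_eq_zero.mp (le_antisymm h6 (mul_self_nonneg _))
    have h7 : (μ j).re * (μ j).re = 1 := by rw [him] at h1; linarith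
    have hre1 : (μ j).re = 1 := le_antisymm (by nlinarith [mul_self_nonneg ((μ j).re - 1)]) hcon
    exact hμne1 j (by apply Complex.ext <;> simp [hre1, him])
  -- real orthonormal basis of eigen-type
  have h_on : Orthonormal ℝ (fun p : Fin c × Fin 2 => (![1, Complex.I] p.2) • b p.1) := by
    rw [orthonormal_iff_ite]
    rintro ⟨j, k⟩ ⟨m, l⟩
    rw [re_inner_euclidean]
    simp only [inner_smul_left, inner_smul_right]
    rw [orthonormal_iff_ite.mp b.orthonormal j m]
    by_cases hjm : j = m
    · subst hjm
      simp only [if_pos rfl, mul_one, Prod.mk.injEq, true_and]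
      fin_cases k <;> fin_cases l <;>
        simp [Complex.conj_I, Complex.I_mul_I]
    · simp [hjm, Prod.ext_iff]
  have h_span : ⊤ ≤ Submodule.span ℝ
      (Set.range (fun p : Fin c × Fin 2 => (![1, Complex.I] p.2) • b p.1)) := by
    intro z _
    rw [← b.sum_repr z]
    refine Submodule.sum_mem _ fun j _ => ?_
    have hdecomp : (b.repr z j) • b j
        = (b.repr z j).re • (![1, Complex.I] (0 : Fin 2)) • b j
          + (b.repr z j).im • (![1, Complex.I] (1 : Fin 2)) • b j := by
      simp only [Matrix.cons_val_zero, Matrix.cons_val_one, Matrix.head_cons, one_smul]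
      rw [← Complex.coe_smul, ← Complex.coe_smul, smul_smul, ← add_smul, Complex.re_add_im]
    rw [hdecomp]
    exact Submodule.add_mem _
      (Submodule.smul_mem _ _ (Submodule.subset_span ⟨(j, 0), rfl⟩))
      (Submodule.smul_mem _ _ (Submodule.subset_span ⟨(j, 1), rfl⟩))
  set b' : OrthonormalBasis (Fin c × Fin 2) ℝ (EuclideanSpace ℂ (Fin c)) :=
    OrthonormalBasis.mk h_on h_span with hb'
  have hb'app : ∀ p, b' p = (![1, Complex.I] p.2) • b p.1 := fun p => by
    rw [hb', OrthonormalBasis.coe_mk]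
  set Φ : (Fin c × Fin 2 → ℝ) ≃ᵐ EuclideanSpace ℂ (Fin c) :=
    (MeasurableEquiv.toLp 2 (Fin c × Fin 2 → ℝ)).trans b'.measurableEquiv.symm with hΦdef
  have hΦ : MeasurePreserving Φ volume volume :=
    (b'.measurePreserving_measurableEquiv.symm).comp
      (EuclideanSpace.volume_preserving_symm_measurableEquiv_toLp _).symm
  have hΦapp : ∀ x, Φ x = b'.repr.symm ((WithLp.equiv 2 (Fin c × Fin 2 → ℝ)).symm x) :=
    fun _ => rfl
  -- the complex coordinates
  set wmap : (Fin c × Fin 2 → ℝ) → EuclideanSpace ℂ (Fin c) := fun x =>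
    (WithLp.equiv 2 (Fin c → ℂ)).symm (fun j => (x (j, 0) : ℂ) + (x (j, 1) : ℂ) * Complex.I)
    with hwmap
  have hΦw : ∀ x, Φ x = b.repr.symm (wmap x) := by
    intro x
    rw [hΦapp, ← OrthonormalBasis.sum_repr_symm, ← OrthonormalBasis.sum_repr_symm,
      Fintype.sum_prod_type]
    refine Finset.sum_congr rfl fun j _ => ?_
    rw [Fin.sum_univ_two]
    have e0 : ∀ k, (WithLp.equiv 2 (Fin c × Fin 2 → ℝ)).symm x (j, k) = x (j, k) := fun _ => rfl
    have e1 : wmap x j = (x (j, 0) : ℂ) + (x (j, 1) : ℂ) * Complex.I := rfl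
    rw [e0, e0, e1, hb'app, hb'app]
    simp only [Matrix.cons_val_zero, Matrix.cons_val_one, Matrix.head_cons, one_smul]
    rw [← Complex.coe_smul, ← Complex.coe_smul, smul_smul, ← add_smul, mul_comm]
  have hTw : ∀ w : EuclideanSpace ℂ (Fin c), T (b.repr.symm w)
      = b.repr.symm ((WithLp.equiv 2 (Fin c → ℂ)).symm (fun j => μ j * w j)) := by
    intro w
    rw [← OrthonormalBasis.sum_repr_symm, map_sum, ← OrthonormalBasis.sum_repr_symm]
    refine Finset.sum_congr rfl fun j _ => ?_
    have e1 : (WithLp.equiv 2 (Fin c → ℂ)).symm (fun j => μ j * w j) j = μ j * w j := rfl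
    rw [LinearMap.map_smul, hbμ j, smul_smul, e1, mul_comm]
  have hinner : ∀ w w' : EuclideanSpace ℂ (Fin c),
      (inner ℂ (b.repr.symm w) (b.repr.symm w') : ℂ)
        = ∑ j, (starRingEnd ℂ) (w j) * w' j := by
    intro w w'
    rw [LinearIsometryEquiv.inner_map_map, PiLp.inner_apply]
    simp only [RCLike.inner_apply']
  -- pointwise formula
  have key : ∀ x : Fin c × Fin 2 → ℝ, f (Φ x)
      = ∏ p : Fin c × Fin 2,
          Complex.exp (-(1 - (starRingEnd ℂ) (μ p.1)) * (x p : ℂ) ^ 2) := by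
    intro x
    rw [hfT, hΦw x, hTw (wmap x), hinner, hinner, ← Complex.exp_sum]
    congr 1
    rw [← Finset.sum_sub_distrib, Fintype.sum_prod_type]
    refine Finset.sum_congr rfl fun j _ => ?_
    rw [Fin.sum_univ_two]
    have e2 : (WithLp.equiv 2 (Fin c → ℂ)).symm (fun j => μ j * wmap x j) j
        = μ j * wmap x j := rfl
    have e1 : wmap x j = (x (j, 0) : ℂ) + (x (j, 1) : ℂ) * Complex.I := rfl
    rw [e2, e1]
    simp only [map_add, map_mul, Complex.conj_ofReal, Complex.conj_I]
    ring_nf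
    simp only [Complex.I_sq]
    ring
  -- finish
  set g : Fin c × Fin 2 → ℝ → ℂ := fun p t =>
    Complex.exp (-(1 - (starRingEnd ℂ) (μ p.1)) * (t : ℂ) ^ 2) with hg
  have hint : ∀ p : Fin c × Fin 2, Integrable (g p) volume := fun p =>
    integrable_cexp_neg_mul_sq (hre p.1)
  have hprod : Integrable (fun x : Fin c × Fin 2 → ℝ => ∏ p, g p (x p)) volume :=
    Integrable.fintype_prod hint
  have hcomp : f ∘ Φ = fun x => ∏ p, g p (x p) := funext key
  constructor
  · exact (hΦ.integrable_comp_emb Φ.measurableEmbedding).mp (by rw [hcomp]; exact hprod)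
  · rw [← hΦ.integral_comp Φ.measurableEmbedding f]
    calc ∫ x, f (Φ x) = ∫ x : Fin c × Fin 2 → ℝ, ∏ p, g p (x p) := by
          refine integral_congr_ae (Filter.Eventually.of_forall fun x => ?_)
          exact key x
      _ = ∏ p, ∫ t, g p t := integral_fintype_prod_eq_prod g
      _ = ∏ j : Fin c, ((Real.pi : ℂ) / (1 - (starRingEnd ℂ) (μ j))) := by
          rw [Fintype.prod_prod_type]
          refine Finset.prod_congr rfl fun j _ => ?_
          rw [Fin.prod_univ_two, ← sq]
          exact gauss_sq (hre j)
      _ = (Real.pi : ℂ) ^ c / ∏ j, (1 - (starRingEnd ℂ) (μ j)) := by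
          rw [Finset.prod_div_distrib, Finset.prod_const, Finset.card_univ, Fintype.card_fin]
      _ = (Real.pi : ℂ) ^ c / (1 - U.conjTranspose).det := by rw [hdet2]
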